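/- arXiv:2211.02395 — 2 statements merged into one kernel-verified Lean document; each statement's English description precedes it below -/
import Mathlib

section
/- For every graph G, DOM(G) ≤ n(G) − α′(G), where n(G) is the number of vertices and α′(G) is the matching number of G. -/
open SimpleGraph

variable {V : Type*}

/-- `D` is an orientation of the simple graph `G`: arcs only along edges, and each edge
gets exactly one of its two possible directions. -/
def IsOrientation (G : SimpleGraph V) (D : V → V → Prop) : Prop :=
  (∀ u v, D u v → G.Adj u v) ∧ (∀ u v, G.Adj u v → (D u v ↔ ¬ D v u))

/-- `S` is a dominating set of the digraph `D`. -/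
def IsDomSet (D : V → V → Prop) (S : Finset V) : Prop :=
  ∀ v, v ∉ S → ∃ u ∈ S, D u v

/-- Domination number of a digraph. -/
noncomputable def domNum (D : V → V → Prop) : ℕ :=
  sInf {n | ∃ S : Finset V, S.card = n ∧ IsDomSet D S}

/-- Orientable domination number of a graph. -/
noncomputable def DOM (G : SimpleGraph V) : ℕ :=
  sSup {n | ∃ D : V → V → Prop, IsOrientation G D ∧ domNum D = n}

/-- Independence number. -/
noncomputable def indepNum (G : SimpleGraph V) : ℕ :=
  sSup {n | ∃ S : Finset V, S.card = n ∧ ∀ u ∈ S, ∀ v ∈ S, ¬ G.Adj u v}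

/-- Matching number. -/
noncomputable def matchNum (G : SimpleGraph V) : ℕ :=
  sSup {n | ∃ M : Finset (Sym2 V), M.card = n ∧ (∀ e ∈ M, e ∈ G.edgeSet) ∧
    ∀ e ∈ M, ∀ f ∈ M, e ≠ f → ∀ v, v ∈ e → v ∉ f}

/-- Maximum order of a bipartite induced subgraph. -/
noncomputable def bipNum (G : SimpleGraph V) : ℕ :=
  sSup {n | ∃ s : Finset V, s.card = n ∧ (G.induce (s : Set V)).Colorable 2}

/-- Join of `G` with a single universal vertex (`none`). -/
def joinK1 (G : SimpleGraph V) : SimpleGraph (Option V) :=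
  SimpleGraph.fromRel (fun a b => a = none ∨ ∃ u v, a = some u ∧ b = some v ∧ G.Adj u v)

/-- Lexicographic product `G ∘ H`. -/
def lexProd {W : Type*} (G : SimpleGraph V) (H : SimpleGraph W) : SimpleGraph (V × W) :=
  SimpleGraph.fromRel (fun a b => G.Adj a.1 b.1 ∨ (a.1 = b.1 ∧ H.Adj a.2 b.2))

/-- Corona `G ⊙ H`: vertex `(u, none)` is the vertex `u` of `G`, the vertices `(u, some w)`
form the copy of `H` joined to `u`. -/
def corona {W : Type*} (G : SimpleGraph V) (H : SimpleGraph W) : SimpleGraph (V × Option W) :=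
  SimpleGraph.fromRel (fun a b =>
    (a.2 = none ∧ b.2 = none ∧ G.Adj a.1 b.1) ∨
    (a.1 = b.1 ∧ ∃ w w', a.2 = some w ∧ b.2 = some w' ∧ H.Adj w w') ∨
    (a.1 = b.1 ∧ a.2 = none ∧ b.2 ≠ none))

/-- A digraph is acyclic if it has no directed cycle. -/
def DigraphAcyclic (D : V → V → Prop) : Prop :=
  ¬ ∃ (m : ℕ) (c : ℕ → V), 0 < m ∧ (∀ i < m, D (c i) (c (i + 1))) ∧ c m = c 0

/-- A packing of a digraph: no arc joins two of its vertices and no vertex has two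
out-neighbors in it. -/
def IsPacking (D : V → V → Prop) (P : Finset V) : Prop :=
  (∀ u ∈ P, ∀ v ∈ P, ¬ D u v) ∧
  (∀ u ∈ P, ∀ v ∈ P, u ≠ v → ∀ w, ¬ (D w u ∧ D w v))

/-- Packing number of a digraph. -/
noncomputable def packNum (D : V → V → Prop) : ℕ :=
  sSup {n | ∃ P : Finset V, P.card = n ∧ IsPacking D P}

/-!
Fix a maximum matching `M` and an orientation `D`. Each edge of `M` has a head and a tail under
`D`, and the `n - |M|` vertices that are not heads dominate `D`: the head of an edge of `M` is
dominated by its tail, which is not a head since the edges of `M` are disjoint.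
-/

open Finset

section Digraph

variable {V : Type*} {D : V → V → Prop}

theorem domNum_le_card {S : Finset V} (hS : IsDomSet D S) : domNum D ≤ S.card :=
  Nat.sInf_le ⟨S, rfl, hS⟩

variable {M : Finset (Sym2 V)} {tail head : Sym2 V → V}

theorem injOn_of_mem_of_pairwise_disjoint (hM : ∀ e ∈ M, ∀ f ∈ M, e ≠ f → ∀ v, v ∈ e → v ∉ f)
    (hhead : ∀ e ∈ M, head e ∈ e) : Set.InjOn head M := by
  intro e he f hf hef
  by_contra hne
  exact hM e he f hf hne (head e) (hhead e he) (hef ▸ hhead f hf)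

theorem isDomSet_sdiff_image_head [Fintype V] [DecidableEq V]
    (hM : ∀ e ∈ M, ∀ f ∈ M, e ≠ f → ∀ v, v ∈ e → v ∉ f)
    (htail : ∀ e ∈ M, tail e ∈ e) (hhead : ∀ e ∈ M, head e ∈ e)
    (harc : ∀ e ∈ M, D (tail e) (head e)) (hloop : ∀ v, ¬ D v v) :
    IsDomSet D (univ \ M.image head) := by
  intro v hv
  obtain ⟨e, he, rfl⟩ : ∃ e ∈ M, head e = v := by simpa using hv
  refine ⟨tail e, ?_, harc e he⟩
  simp only [mem_sdiff, mem_univ, mem_image, true_and, not_exists, not_and]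
  intro f hf htail_eq
  obtain rfl : e = f := by
    by_contra hne
    exact hM e he f hf hne _ (htail e he) (htail_eq ▸ hhead f hf)
  exact hloop _ (htail_eq ▸ harc e he)

end Digraph

section Orientation

variable {V : Type*} {G : SimpleGraph V} {D : V → V → Prop}

theorem IsOrientation.irrefl (hD : IsOrientation G D) (v : V) : ¬ D v v :=
  fun h => G.irrefl (hD.1 v v h)

-- Stated for every `e`, not only for edges, so that `choose` yields total functions on `Sym2 V`.
theorem IsOrientation.exists_mk_eq_and_arc (hD : IsOrientation G D) (e : Sym2 V) :
    ∃ u v, s(u, v) = e ∧ (e ∈ G.edgeSet → D u v) := by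
  induction e using Sym2.ind with
  | h a b =>
    by_cases hab : D a b
    · exact ⟨a, b, rfl, fun _ => hab⟩
    · exact ⟨b, a, Sym2.eq_swap, fun he => not_not.1 (mt ((hD.2 a b he).2) hab)⟩

theorem IsOrientation.domNum_le_card_sub [Fintype V] (hD : IsOrientation G D)
    (M : Finset (Sym2 V)) (hMG : ∀ e ∈ M, e ∈ G.edgeSet)
    (hM : ∀ e ∈ M, ∀ f ∈ M, e ≠ f → ∀ v, v ∈ e → v ∉ f) :
    domNum D ≤ Fintype.card V - M.card := by
  classical
  choose tail head hmk harc using hD.exists_mk_eq_and_arc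
  have hmem (e : Sym2 V) : tail e ∈ e ∧ head e ∈ e := by
    simpa only [hmk] using And.intro (Sym2.mem_mk_left (tail e) (head e))
      (Sym2.mem_mk_right (tail e) (head e))
  have hdom : IsDomSet D (univ \ M.image head) :=
    isDomSet_sdiff_image_head hM (fun e _ => (hmem e).1) (fun e _ => (hmem e).2)
      (fun e he => harc e (hMG e he)) hD.irrefl
  calc domNum D ≤ (univ \ M.image head).card := domNum_le_card hdom
    _ = Fintype.card V - M.card := by
        rw [card_univ_sdiff,
          card_image_of_injOn (injOn_of_mem_of_pairwise_disjoint hM fun e _ => (hmem e).2)]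

end Orientation

theorem exists_matching_card_eq_matchNum {V : Type*} [Finite V] (G : SimpleGraph V) :
    ∃ M : Finset (Sym2 V), M.card = matchNum G ∧ (∀ e ∈ M, e ∈ G.edgeSet) ∧
      ∀ e ∈ M, ∀ f ∈ M, e ≠ f → ∀ v, v ∈ e → v ∉ f := by
  have := Fintype.ofFinite (Sym2 V)
  apply Nat.sSup_mem (s := {n | ∃ M : Finset (Sym2 V), M.card = n ∧ _})
  · exact ⟨0, ∅, by simp⟩
  · refine ⟨Fintype.card (Sym2 V), ?_⟩
    rintro _ ⟨M, rfl, -⟩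
    exact card_le_univ M

theorem stmt6 {V : Type*} [Fintype V] (G : SimpleGraph V) :
    DOM G ≤ Fintype.card V - matchNum G := by
  obtain ⟨M, hMcard, hMG, hM⟩ := exists_matching_card_eq_matchNum G
  refine csSup_le' ?_
  rintro _ ⟨D, hD, rfl⟩
  exact hMcard ▸ hD.domNum_le_card_sub M hMG hM
end

section
/- If G and H are graphs with DOM(H + K₁) = DOM(H), then DOM(G ⊙ H) = DOM(H)·n(G), where G ⊙ H is the corona of G and H. -/
/-!
Any orientation `D` of `G ⊙ H` restricts, on the fiber `{u} × Option W` of each vertex `u` of `G`,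
to an orientation of `H + K₁`, and the union of minimum dominating sets of these restrictions
dominates `D`; hence `DOM (G ⊙ H) ≤ n(G) · DOM (H + K₁)`. Conversely, orient each copy of `H` by an
orientation attaining `DOM H` and every edge between a copy and its apex towards the apex. A vertex
of a copy of `H` then receives arcs only from its own copy, so every dominating set meets each copy
in a dominating set of that orientation of `H`, and `DOM (G ⊙ H) ≥ n(G) · DOM H`.
-/

open SimpleGraph

variable {V : Type*}

lemma isDomSet_univ [Fintype V] (D : V → V → Prop) : IsDomSet D Finset.univ :=
  fun v hv => absurd (Finset.mem_univ v) hv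

lemma domNum_le_card_of_isDomSet {D : V → V → Prop} {S : Finset V} (hS : IsDomSet D S) :
    domNum D ≤ S.card :=
  Nat.sInf_le ⟨S, rfl, hS⟩

lemma domNum_le_card_s8 [Fintype V] (D : V → V → Prop) : domNum D ≤ Fintype.card V :=
  domNum_le_card_of_isDomSet (isDomSet_univ D)

lemma exists_isDomSet_card_eq_domNum [Fintype V] (D : V → V → Prop) :
    ∃ S : Finset V, S.card = domNum D ∧ IsDomSet D S :=
  Nat.sInf_mem (s := {n | ∃ S : Finset V, S.card = n ∧ IsDomSet D S})
    ⟨Fintype.card V, Finset.univ, rfl, isDomSet_univ D⟩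

section Orientation
variable {V' : Type*} {G : SimpleGraph V}

lemma exists_isOrientation (G : SimpleGraph V) : ∃ D, IsOrientation G D := by
  refine ⟨fun u v => G.Adj u v ∧ WellOrderingRel u v, fun u v h => h.1, fun u v h => ?_⟩
  simp only [h, h.symm, true_and]
  rcases trichotomous_of WellOrderingRel u v with huv | rfl | hvu
  · exact iff_of_true huv (asymm huv)
  · exact (G.irrefl h).elim
  · exact iff_of_false (asymm hvu) (not_not.mpr hvu)

lemma IsOrientation.comap {D : V → V → Prop} (hD : IsOrientation G D) (f : V' → V) :
    IsOrientation (G.comap f) (fun a b => D (f a) (f b)) :=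
  ⟨fun _ _ hab => hD.1 _ _ hab, fun _ _ hab => hD.2 _ _ hab⟩

lemma DOM_le {n : ℕ} (h : ∀ D, IsOrientation G D → domNum D ≤ n) : DOM G ≤ n :=
  csSup_le' fun _ ⟨D, hD, hm⟩ => hm ▸ h D hD

variable [Fintype V]

lemma bddAbove_domNum_orientations (G : SimpleGraph V) :
    BddAbove {n | ∃ D, IsOrientation G D ∧ domNum D = n} :=
  ⟨Fintype.card V, fun _ ⟨D, _, hD⟩ => hD ▸ domNum_le_card_s8 D⟩

lemma domNum_le_DOM {D : V → V → Prop} (hD : IsOrientation G D) : domNum D ≤ DOM G :=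
  le_csSup (bddAbove_domNum_orientations G) ⟨D, hD, rfl⟩

lemma exists_isOrientation_domNum_eq_DOM (G : SimpleGraph V) :
    ∃ D, IsOrientation G D ∧ domNum D = DOM G :=
  have ⟨D, hD⟩ := exists_isOrientation G
  Nat.sSup_mem (s := {n | ∃ D, IsOrientation G D ∧ domNum D = n}) ⟨domNum D, D, hD, rfl⟩
    (bddAbove_domNum_orientations G)

end Orientation

section Fibers
variable {X : Type*} [Fintype V] [Fintype X]

lemma card_filter_snd_mem [DecidableEq X] (S : V → Finset X) :
    (Finset.univ.filter fun p : V × X => p.2 ∈ S p.1).card = ∑ u, (S u).card := by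
  rw [Finset.card_filter, Fintype.sum_prod_type]
  refine Finset.sum_congr rfl fun u _ => ?_
  simp_rw [← Finset.card_filter, Finset.filter_mem_eq_inter, Finset.univ_inter]

lemma domNum_le_sum_domNum_fiber (D : V × X → V × X → Prop) :
    domNum D ≤ ∑ u, domNum (fun a b => D (u, a) (u, b)) := by
  classical
  choose S hS_card hS_dom using fun u => exists_isDomSet_card_eq_domNum fun a b => D (u, a) (u, b)
  have h_dom : IsDomSet D (Finset.univ.filter fun p => p.2 ∈ S p.1) := by
    rintro ⟨u, a⟩ ha
    obtain ⟨b, hb, hba⟩ := hS_dom u a (by simpa using ha)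
    exact ⟨(u, b), by simpa using hb, hba⟩
  calc domNum D ≤ _ := domNum_le_card_of_isDomSet h_dom
    _ = ∑ u, domNum (fun a b => D (u, a) (u, b)) := by simp only [card_filter_snd_mem, hS_card]

end Fibers

section Corona
variable {W : Type*} {G : SimpleGraph V} {H : SimpleGraph W} {u v : V} {w w' : W}

@[simp] lemma joinK1_adj_none_none : ¬ (joinK1 H).Adj none none := (joinK1 H).irrefl

@[simp] lemma joinK1_adj_none_some : (joinK1 H).Adj none (some w) := by simp [joinK1]

@[simp] lemma joinK1_adj_some_none : (joinK1 H).Adj (some w) none := by simp [joinK1]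

@[simp] lemma joinK1_adj_some_some : (joinK1 H).Adj (some w) (some w') ↔ H.Adj w w' := by
  simpa [joinK1, H.adj_comm] using fun h : H.Adj w w' => h.ne

@[simp] lemma corona_adj_none_none : (corona G H).Adj (u, none) (v, none) ↔ G.Adj u v := by
  simpa [corona, G.adj_comm] using fun h : G.Adj u v => h.ne

@[simp] lemma corona_adj_none_some : (corona G H).Adj (u, none) (v, some w) ↔ u = v := by
  simp [corona]

@[simp] lemma corona_adj_some_none : (corona G H).Adj (u, some w) (v, none) ↔ u = v := by
  simp [corona, eq_comm]

@[simp] lemma corona_adj_some_some :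
    (corona G H).Adj (u, some w) (v, some w') ↔ u = v ∧ H.Adj w w' := by
  simp only [corona, fromRel_adj, ne_eq, Prod.mk.injEq, Option.some.injEq]
  aesop (add safe Adj.ne, safe Adj.symm)

lemma comap_prodMk_corona (u : V) : (corona G H).comap (Prod.mk u) = joinK1 H := by
  ext a b
  cases a <;> cases b <;> simp

end Corona

section CoronaOrientation
variable {W : Type*}

lemma DOM_corona_le_mul_card [Fintype V] [Fintype W] (G : SimpleGraph V) (H : SimpleGraph W) :
    DOM (corona G H) ≤ DOM (joinK1 H) * Fintype.card V := by
  refine DOM_le fun D hD => ?_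
  calc domNum D ≤ ∑ u, domNum (fun a b => D (u, a) (u, b)) := domNum_le_sum_domNum_fiber D
    _ ≤ ∑ _u : V, DOM (joinK1 H) := Finset.sum_le_sum fun u _ =>
        domNum_le_DOM (comap_prodMk_corona (G := G) u ▸ hD.comap (Prod.mk u))
    _ = DOM (joinK1 H) * Fintype.card V := by simp [mul_comm]

def coronaOrient (DG : V → V → Prop) (DH : W → W → Prop) : V × Option W → V × Option W → Prop
  | (u, none), (v, none) => DG u v
  | (u, some w), (v, some w') => u = v ∧ DH w w'
  | (u, some _), (v, none) => u = v
  | (_, none), (_, some _) => False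

lemma coronaOrient_isOrientation {G : SimpleGraph V} {H : SimpleGraph W}
    {DG : V → V → Prop} {DH : W → W → Prop}
    (hDG : IsOrientation G DG) (hDH : IsOrientation H DH) :
    IsOrientation (corona G H) (coronaOrient DG DH) := by
  constructor
  · rintro ⟨u, _ | w⟩ ⟨v, _ | w'⟩ h
    · simpa using hDG.1 u v h
    · exact h.elim
    · simpa [coronaOrient] using h
    · simpa using h.imp_right (hDH.1 w w')
  · rintro ⟨u, _ | w⟩ ⟨v, _ | w'⟩ h
    · exact hDG.2 u v (by simpa using h)
    · simpa [coronaOrient, eq_comm] using h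
    · simpa [coronaOrient] using h
    · obtain ⟨rfl, hH⟩ := (corona_adj_some_some (G := G)).mp h
      simpa [coronaOrient] using hDH.2 w w' hH

lemma domNum_mul_card_le_domNum_coronaOrient [Fintype V] [Fintype W]
    (DG : V → V → Prop) (DH : W → W → Prop) :
    domNum DH * Fintype.card V ≤ domNum (coronaOrient DG DH) := by
  classical
  obtain ⟨S, hS_card, hS_dom⟩ := exists_isDomSet_card_eq_domNum (coronaOrient DG DH)
  set T : V → Finset W := fun u => Finset.univ.filter fun w => (u, some w) ∈ S
  have hT_dom (u : V) : IsDomSet DH (T u) := by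
    intro w hw
    obtain ⟨⟨v, _ | w'⟩, hS, hD⟩ := hS_dom (u, some w) (by simpa [T] using hw)
    · simp [coronaOrient] at hD
    · obtain ⟨rfl, hD⟩ := hD
      exact ⟨w', by simpa [T] using hS, hD⟩
  calc domNum DH * Fintype.card V = ∑ _u : V, domNum DH := by simp [mul_comm]
    _ ≤ ∑ u, (T u).card := Finset.sum_le_sum fun u _ => domNum_le_card_of_isDomSet (hT_dom u)
    _ = (Finset.univ.filter fun p : V × W => p.2 ∈ T p.1).card := (card_filter_snd_mem T).symm
    _ ≤ S.card := Finset.card_le_card_of_injOn (fun p => (p.1, some p.2))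
        (fun p hp => by simpa [T] using hp) (fun p _ q _ h => by simpa [Prod.ext_iff] using h)
    _ = domNum (coronaOrient DG DH) := hS_card

end CoronaOrientation

theorem stmt8 {V W : Type*} [Fintype V] [Fintype W]
    (G : SimpleGraph V) (H : SimpleGraph W)
    (h : DOM (joinK1 H) = DOM H) :
    DOM (corona G H) = DOM H * Fintype.card V := by
  refine le_antisymm (h ▸ DOM_corona_le_mul_card G H) ?_
  obtain ⟨DH, hDH, hDH_eq⟩ := exists_isOrientation_domNum_eq_DOM H
  obtain ⟨DG, hDG⟩ := exists_isOrientation G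
  calc DOM H * Fintype.card V = domNum DH * Fintype.card V := by rw [hDH_eq]
    _ ≤ domNum (coronaOrient DG DH) := domNum_mul_card_le_domNum_coronaOrient DG DH
    _ ≤ DOM (corona G H) := domNum_le_DOM (coronaOrient_isOrientation hDG hDH)
end
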